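/- (Noncommutative polynomial phenomenon, qualitative form.) Let n ≥ 3 and let Δ be a triangulation of [n]. Let 𝒬_Δ be the ℚ-subalgebra of 𝒜_n generated by the elements y_{ij}^k := x_{ki}⁻¹x_{kj} for all triples of distinct i,j,k ∈ [n] with (i,k) ∈ Δ and (k,j) ∈ Δ. Then for every triple (i,j,k) of distinct indices in [n] with (i,k) ∈ Δ, the element y_{kj}^i = x_{ik}⁻¹x_{ij} belongs to 𝒬_Δ. -/

import Mathlib

open scoped Classical

noncomputable section

namespace NCPolygon

/-- Cyclic successor on `Fin n` (the vertices of the `n`-gon in cyclic order). -/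
def csucc {n : ℕ} (i : Fin n) : Fin n :=
  ⟨(i.1 + 1) % n, Nat.mod_lt _ (Nat.lt_of_le_of_lt (Nat.zero_le _) i.isLt)⟩

/-- Cyclic predecessor on `Fin n`. -/
def cpred {n : ℕ} (i : Fin n) : Fin n :=
  ⟨(i.1 + (n - 1)) % n, Nat.mod_lt _ (Nat.lt_of_le_of_lt (Nat.zero_le _) i.isLt)⟩

/-- A list of elements of `Fin n` is *cyclic* if its entries are distinct and some
cyclic rotation of it is strictly increasing. -/
def IsCyclicSeq {n : ℕ} (l : List (Fin n)) : Prop :=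
  l.Nodup ∧ ∃ k : ℕ, (l.rotate k).Pairwise (· < ·)

/-- The pair `(i,k)` crosses `(j,l)` iff `(i,j,k,l)` is cyclic. -/
def Crosses {n : ℕ} (p q : Fin n × Fin n) : Prop :=
  IsCyclicSeq [p.1, q.1, p.2, q.2]

def NonCrossing {n : ℕ} (Δ : Set (Fin n × Fin n)) : Prop :=
  (∀ p ∈ Δ, p.1 ≠ p.2) ∧ ∀ p ∈ Δ, ∀ q ∈ Δ, ¬ Crosses p q

/-- A triangulation of the `n`-gon: a maximal crossing-free set of (directed) chords. -/
def IsTriangulation {n : ℕ} (Δ : Set (Fin n × Fin n)) : Prop :=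
  NonCrossing Δ ∧ ∀ Δ' : Set (Fin n × Fin n), NonCrossing Δ' → Δ ⊆ Δ' → Δ' = Δ

/-! ### The noncommutative polygon algebra `𝒜_n` -/

abbrev OffD (n : ℕ) := {p : Fin n × Fin n // p.1 ≠ p.2}

abbrev AGen (n : ℕ) := OffD n ⊕ OffD n

def xF {n : ℕ} (i j : Fin n) : FreeAlgebra ℚ (AGen n) :=
  if h : i ≠ j then FreeAlgebra.ι ℚ (Sum.inl ⟨(i, j), h⟩) else 1

def xiF {n : ℕ} (i j : Fin n) : FreeAlgebra ℚ (AGen n) :=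
  if h : i ≠ j then FreeAlgebra.ι ℚ (Sum.inr ⟨(i, j), h⟩) else 1

/-- The defining relations of `𝒜_n`: invertibility, triangle, and exchange relations. -/
inductive ARel (n : ℕ) : FreeAlgebra ℚ (AGen n) → FreeAlgebra ℚ (AGen n) → Prop
  | mul_inv {i j : Fin n} (h : i ≠ j) : ARel n (xF i j * xiF i j) 1
  | inv_mul {i j : Fin n} (h : i ≠ j) : ARel n (xiF i j * xF i j) 1
  | triangle {i j k : Fin n} (hij : i ≠ j) (hik : i ≠ k) (hjk : j ≠ k) :
      ARel n (xF i j * xiF k j * xF k i) (xF i k * xiF j k * xF j i)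
  | exchange {i j k l : Fin n} (h : IsCyclicSeq [i, j, k, l]) :
      ARel n (xF j l) (xF j k * xiF i k * xF i l + xF j i * xiF k i * xF k l)

/-- The noncommutative `n`-gon algebra `𝒜_n`. -/
abbrev NCPoly (n : ℕ) := RingQuot (ARel n)

/-- The generator `x_{ij} ∈ 𝒜_n` (junk value `1` when `i = j`). -/
def X {n : ℕ} (i j : Fin n) : NCPoly n :=
  RingQuot.mkAlgHom ℚ (ARel n) (xF i j)

/-- The generator `x_{ij}⁻¹ ∈ 𝒜_n`. -/
def Xinv {n : ℕ} (i j : Fin n) : NCPoly n :=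
  RingQuot.mkAlgHom ℚ (ARel n) (xiF i j)

/-- The noncommutative angle `T_i^{jk} = x_{ji}⁻¹ x_{jk} x_{ik}⁻¹ ∈ 𝒜_n`. -/
def Tang {n : ℕ} (i j k : Fin n) : NCPoly n := Xinv j i * X j k * Xinv i k

/-! ### Triangle groups -/

def tF {n : ℕ} (Δ : Set (Fin n × Fin n)) (i j : Fin n) : FreeGroup Δ :=
  if h : (i, j) ∈ Δ then FreeGroup.of (⟨(i, j), h⟩ : Δ) else 1

/-- The triangle relations of the triangle group `𝕋_Δ`. -/
def triRels {n : ℕ} (Δ : Set (Fin n × Fin n)) : Set (FreeGroup Δ) :=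
  { w | ∃ i j k : Fin n, i ≠ j ∧ i ≠ k ∧ j ≠ k ∧
      (i, j) ∈ Δ ∧ (j, i) ∈ Δ ∧ (i, k) ∈ Δ ∧ (k, i) ∈ Δ ∧ (j, k) ∈ Δ ∧ (k, j) ∈ Δ ∧
      w = tF Δ i j * (tF Δ k j)⁻¹ * tF Δ k i *
        (tF Δ i k * (tF Δ j k)⁻¹ * tF Δ j i)⁻¹ }

/-- The triangle group `𝕋_Δ` of a triangulation `Δ`. -/
abbrev TriGroup {n : ℕ} (Δ : Set (Fin n × Fin n)) := PresentedGroup (triRels Δ)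

/-- The generator `t_{ij} ∈ 𝕋_Δ` (junk value `1` when `(i,j) ∉ Δ`). -/
def tG {n : ℕ} (Δ : Set (Fin n × Fin n)) (i j : Fin n) : TriGroup Δ :=
  if h : (i, j) ∈ Δ then PresentedGroup.of (rels := triRels Δ) ⟨(i, j), h⟩ else 1

/-! ### The big triangle group `𝕋_n` -/

def btF {n : ℕ} (i j : Fin n) : FreeGroup (OffD n) :=
  if h : i ≠ j then FreeGroup.of (⟨(i, j), h⟩ : OffD n) else 1

def bigRels (n : ℕ) : Set (FreeGroup (OffD n)) :=
  { w | ∃ i j k : Fin n, i ≠ j ∧ i ≠ k ∧ j ≠ k ∧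
      w = btF i j * (btF k j)⁻¹ * btF k i * (btF i k * (btF j k)⁻¹ * btF j i)⁻¹ }

/-- The big triangle group `𝕋_n`. -/
abbrev BigTriGroup (n : ℕ) := PresentedGroup (bigRels n)

/-- The generator `t_{ij} ∈ 𝕋_n`. -/
def bigT {n : ℕ} (i j : Fin n) : BigTriGroup n :=
  if h : i ≠ j then PresentedGroup.of (rels := bigRels n) ⟨(i, j), h⟩ else 1

/-! ### Distinguished subalgebras and subgroups -/

/-- `𝒜_Δ`: the subalgebra of `𝒜_n` generated by all `x_{ij}` together with the
`x_{ij}⁻¹` for `(i,j) ∈ Δ`. -/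
def ADelta (n : ℕ) (Δ : Set (Fin n × Fin n)) : Subalgebra ℚ (NCPoly n) :=
  Algebra.adjoin ℚ
    ({a | ∃ i j : Fin n, i ≠ j ∧ a = X i j} ∪ {a | ∃ p ∈ Δ, a = Xinv p.1 p.2})

/-- `𝒬_n`: the subalgebra of `𝒜_n` generated by the `y_{ij}^k = x_{ki}⁻¹ x_{kj}`. -/
def Qn (n : ℕ) : Subalgebra ℚ (NCPoly n) :=
  Algebra.adjoin ℚ
    {a : NCPoly n | ∃ i j k : Fin n, i ≠ j ∧ i ≠ k ∧ j ≠ k ∧ a = Xinv k i * X k j}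

/-- `𝕌_Δ`: the subgroup of `𝕋_Δ` generated by the `u_{ij}^k = t_{ki}⁻¹ t_{kj}`. -/
def UDelta {n : ℕ} (Δ : Set (Fin n × Fin n)) : Subgroup (TriGroup Δ) :=
  Subgroup.closure
    {g | ∃ i j k : Fin n, (k, i) ∈ Δ ∧ (k, j) ∈ Δ ∧ g = (tG Δ k i)⁻¹ * tG Δ k j}

/-!
Fix `(i, k) ∈ Δ` and induct on the length of the arc cut off by this chord on the side of `j`.
The triangle `(i, m, k)` of `Δ` on that side either has apex `m = j`, and then `y_{kj}^i` is a
generator, or `j` lies beyond one of its sides `(i, m)`, `(m, k)`. In the first case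
`y_{kj}^i = y_{km}^i y_{mj}^i`; in the second the exchange relation for the quadrilateral
`(k, i, m, j)` gives `y_{kj}^i = y_{km}^i y_{mj}^k + y_{kj}^m`. The factors other than the
generator `y_{km}^i` belong to a chord cutting off a shorter arc containing `j`, in one of its two
orientations, so the induction carries both `y_{vj}^u` and `y_{uj}^v` for each chord `(u, v)`.
-/

variable {n : ℕ}

/-- The number of steps from `a` forward to `b` around the `n`-gon. -/
def cdist (a b : Fin n) : ℕ := (b - a : Fin n)

lemma cdist_spec (a b : Fin n) :
    a.1 ≤ b.1 ∧ cdist a b + a.1 = b.1 ∨ b.1 < a.1 ∧ cdist a b + a.1 = b.1 + n := by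
  rcases le_or_gt a b with h | h
  · exact Or.inl ⟨h, by rw [cdist, Fin.coe_sub_iff_le.2 h]; omega⟩
  · exact Or.inr ⟨h, by rw [cdist, Fin.coe_sub_iff_lt.2 h]; omega⟩

lemma cdist_lt (a b : Fin n) : cdist a b < n := (b - a).isLt

lemma cdist_eq_zero {a b : Fin n} : cdist a b = 0 ↔ a = b := by
  rw [Fin.ext_iff]
  have := cdist_spec a b
  have := a.isLt
  constructor <;> intro <;> omega

lemma cdist_pos {a b : Fin n} : 0 < cdist a b ↔ a ≠ b :=
  Nat.pos_iff_ne_zero.trans cdist_eq_zero.not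

lemma cdist_injective (a : Fin n) : Function.Injective (cdist a) := by
  intro b c h
  have := cdist_spec a b
  have := cdist_spec a c
  have := a.isLt
  exact Fin.ext (by omega)

lemma cdist_add_cdist (a b c : Fin n) :
    cdist a b + cdist b c = cdist a c ∨ cdist a b + cdist b c = cdist a c + n := by
  have := cdist_spec a b; have := cdist_spec b c; have := cdist_spec a c
  have := c.isLt
  omega

lemma cdist_add_cdist_of_le {a b c : Fin n} (h : cdist a b ≤ cdist a c) :
    cdist a b + cdist b c = cdist a c := by
  have := cdist_lt b c
  rcases cdist_add_cdist a b c with h' | h' <;> omega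

lemma cdist_add_cdist_swap {a b : Fin n} (h : a ≠ b) : cdist a b + cdist b a = n := by
  have := cdist_add_cdist a b a
  rw [cdist_eq_zero.2 rfl] at this
  have := cdist_pos.2 h
  omega

lemma exists_cdist_eq_one (a : Fin n) (hn : 1 < n) : ∃ b, cdist a b = 1 := by
  have : NeZero n := ⟨by omega⟩
  refine ⟨a + 1, ?_⟩
  rw [cdist, add_sub_cancel_left, Fin.val_one', Nat.mod_eq_of_lt hn]

lemma IsCyclicSeq.rotate {l : List (Fin n)} (h : IsCyclicSeq l) (m : ℕ) :
    IsCyclicSeq (l.rotate m) := by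
  obtain ⟨hnd, k, hk⟩ := h
  refine ⟨(l.rotate_perm m).nodup_iff.2 hnd, (l.length - 1) * m + k, ?_⟩
  rcases Nat.eq_zero_or_pos l.length with hl | hl
  · simp [List.length_eq_zero_iff.1 hl]
  · have e : m + ((l.length - 1) * m + k) = l.length * m + k := by
      obtain ⟨L, hL⟩ := Nat.exists_eq_add_of_lt hl
      rw [hL, Nat.add_sub_cancel]
      ring
    rwa [List.rotate_rotate, e, ← List.rotate_rotate, List.rotate_length_mul]

lemma exists_rotate_four_iff {α : Type*} (P : List α → Prop) (a b c d : α) :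
    (∃ k, P ([a, b, c, d].rotate k)) ↔
      P [a, b, c, d] ∨ P [b, c, d, a] ∨ P [c, d, a, b] ∨ P [d, a, b, c] := by
  constructor
  · rintro ⟨k, hk⟩
    rw [← List.rotate_mod] at hk
    have : k % 4 < 4 := Nat.mod_lt _ (by norm_num)
    interval_cases h : k % 4 <;> simp_all
  · rintro (h | h | h | h)
    exacts [⟨0, h⟩, ⟨1, h⟩, ⟨2, h⟩, ⟨3, h⟩]

lemma isCyclicSeq_iff_cdist {a b c d : Fin n} :
    IsCyclicSeq [a, b, c, d] ↔
      0 < cdist a b ∧ cdist a b < cdist a c ∧ cdist a c < cdist a d := by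
  rw [IsCyclicSeq, exists_rotate_four_iff]
  simp only [List.nodup_cons, List.nodup_nil, List.pairwise_cons, List.Pairwise.nil,
    List.mem_cons, List.not_mem_nil, or_false, not_or, forall_eq_or_imp, forall_eq,
    IsEmpty.forall_iff, implies_true, not_false_eq_true, and_true, Fin.lt_def, ← Fin.val_ne_iff]
  have := cdist_spec a b; have := cdist_spec a c; have := cdist_spec a d
  have := cdist_lt a b; have := cdist_lt a c; have := cdist_lt a d
  constructor <;> intro h <;> omega

lemma crosses_iff_cdist {a b c d : Fin n} :
    Crosses (a, b) (c, d) ↔ 0 < cdist a c ∧ cdist a c < cdist a b ∧ cdist a b < cdist a d :=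
  isCyclicSeq_iff_cdist

lemma Crosses.symm {p q : Fin n × Fin n} (h : Crosses p q) : Crosses q p.swap :=
  IsCyclicSeq.rotate h 1

section Triangulation

variable {Δ : Set (Fin n × Fin n)}

lemma IsTriangulation.not_crosses (hΔ : IsTriangulation Δ) {p q : Fin n × Fin n} (hp : p ∈ Δ)
    (hq : q ∈ Δ) : ¬ Crosses p q :=
  hΔ.1.2 p hp q hq

lemma IsTriangulation.ne (hΔ : IsTriangulation Δ) {a b : Fin n} (h : (a, b) ∈ Δ) : a ≠ b :=
  hΔ.1.1 _ h

lemma IsTriangulation.mem_of_forall_not_crosses (hΔ : IsTriangulation Δ) {p : Fin n × Fin n}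
    (hp : p.1 ≠ p.2) (h : ∀ q ∈ Δ, ¬ Crosses p q ∧ ¬ Crosses q p) : p ∈ Δ := by
  have hins : NonCrossing (insert p Δ) := by
    refine ⟨?_, ?_⟩
    · rintro q (rfl | hq)
      exacts [hp, hΔ.1.1 q hq]
    · rintro q (rfl | hq) r (rfl | hr)
      · exact fun hc => by simp [Crosses, IsCyclicSeq] at hc
      · exact (h r hr).1
      · exact (h q hq).2
      · exact hΔ.not_crosses hq hr
  rw [← hΔ.2 _ hins (Set.subset_insert p Δ)]
  exact Set.mem_insert p Δ

lemma IsTriangulation.swap_mem (hΔ : IsTriangulation Δ) {a b : Fin n} (h : (a, b) ∈ Δ) :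
    (b, a) ∈ Δ :=
  hΔ.mem_of_forall_not_crosses (hΔ.ne h).symm fun _ hq =>
    ⟨fun hc => hΔ.not_crosses hq h hc.symm,
      fun hc => hΔ.not_crosses h hq hc.symm.symm.symm⟩

lemma IsTriangulation.mem_of_forall_not_crosses_left (hΔ : IsTriangulation Δ)
    {p : Fin n × Fin n} (hp : p.1 ≠ p.2) (h : ∀ q ∈ Δ, ¬ Crosses p q) : p ∈ Δ :=
  hΔ.mem_of_forall_not_crosses hp fun q hq =>
    ⟨h q hq, fun hc => h _ (hΔ.swap_mem hq) hc.symm⟩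

lemma IsTriangulation.mem_of_cdist_eq_one (hΔ : IsTriangulation Δ) {a b : Fin n}
    (h : cdist a b = 1) : (a, b) ∈ Δ := by
  have hab : a ≠ b := cdist_pos.1 (by omega)
  refine hΔ.mem_of_forall_not_crosses_left hab fun ⟨c, d⟩ _ hc => ?_
  have := crosses_iff_cdist.1 hc
  omega

/-- Take `m` on the arc as far from `a` as possible with `(a, m) ∈ Δ`: a chord crossing `(m, b)`
would cross `(a, b)` or `(a, m)`, or be a chord `(a, c)` with `c` beyond `m`. -/
lemma IsTriangulation.exists_triangle (hΔ : IsTriangulation Δ) {a b : Fin n} (hab : (a, b) ∈ Δ)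
    (h : 1 < cdist a b) :
    ∃ m, 0 < cdist a m ∧ cdist a m < cdist a b ∧ (a, m) ∈ Δ ∧ (m, b) ∈ Δ := by
  obtain ⟨s, hs⟩ := exists_cdist_eq_one a (h.trans (cdist_lt a b))
  set C := Finset.univ.filter fun m => 0 < cdist a m ∧ cdist a m < cdist a b ∧ (a, m) ∈ Δ
  have hsC : s ∈ C := by simp [C, hs, h, hΔ.mem_of_cdist_eq_one hs]
  obtain ⟨m, hmC, hmax⟩ := C.exists_max_image (cdist a) ⟨s, hsC⟩
  simp only [C, Finset.mem_filter, Finset.mem_univ, true_and] at hmC hmax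
  obtain ⟨hm₀, hmb, ham⟩ := hmC
  have hmb' := cdist_add_cdist_of_le hmb.le
  refine ⟨m, hm₀, hmb, ham, hΔ.mem_of_forall_not_crosses_left ?_ ?_⟩
  · exact fun e => hmb.ne (congrArg (cdist a) e)
  rintro ⟨c, d⟩ hcd hc
  obtain ⟨hc₀, hcb, hbd⟩ := crosses_iff_cdist.1 hc
  have := cdist_add_cdist a m c
  have := cdist_lt a b; have := cdist_lt a d; have := cdist_lt m d
  rcases cdist_add_cdist a m d with hmd | hmd
  · refine hΔ.not_crosses hab hcd (crosses_iff_cdist.2 ⟨?_, ?_, ?_⟩) <;> omega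
  rcases Nat.eq_zero_or_pos (cdist a d) with had | had
  · rw [← cdist_eq_zero.1 had] at hcd
    have := hmax c ⟨by omega, by omega, hΔ.swap_mem hcd⟩
    omega
  · refine hΔ.not_crosses ham (hΔ.swap_mem hcd) (crosses_iff_cdist.2 ⟨?_, ?_, ?_⟩) <;> omega

end Triangulation

lemma X_mul_Xinv {i j : Fin n} (h : i ≠ j) : X i j * Xinv i j = 1 := by
  simpa only [X, Xinv, map_mul, map_one] using RingQuot.mkAlgHom_rel ℚ (ARel.mul_inv h)

lemma Xinv_mul_X {i j : Fin n} (h : i ≠ j) : Xinv i j * X i j = 1 := by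
  simpa only [X, Xinv, map_mul, map_one] using RingQuot.mkAlgHom_rel ℚ (ARel.inv_mul h)

lemma X_exchange {i j k l : Fin n} (h : IsCyclicSeq [i, j, k, l]) :
    X j l = X j k * Xinv i k * X i l + X j i * Xinv k i * X k l := by
  simpa only [X, Xinv, map_add, map_mul] using RingQuot.mkAlgHom_rel ℚ (ARel.exchange h)

lemma Xinv_mul_X_eq_mul {a i j m : Fin n} (ham : a ≠ m) :
    Xinv a i * X a j = (Xinv a i * X a m) * (Xinv a m * X a j) := by
  rw [mul_assoc, ← mul_assoc (X a m), X_mul_Xinv ham, one_mul]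

lemma Xinv_mul_X_eq_add {a i j m : Fin n} (hai : a ≠ i)
    (h : X a j = X a m * Xinv i m * X i j + X a i * Xinv m i * X m j) :
    Xinv a i * X a j = (Xinv a i * X a m) * (Xinv i m * X i j) + Xinv m i * X m j := by
  rw [h, mul_add]
  congr 1
  · noncomm_ring
  · simp only [← mul_assoc, Xinv_mul_X hai, one_mul]

/-- `𝒬_Δ`. -/
def QDelta (Δ : Set (Fin n × Fin n)) : Subalgebra ℚ (NCPoly n) :=
  Algebra.adjoin ℚ
    {a : NCPoly n | ∃ p q r : Fin n, p ≠ q ∧ p ≠ r ∧ q ≠ r ∧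
      (p, r) ∈ Δ ∧ (r, q) ∈ Δ ∧ a = Xinv r p * X r q}

section QDelta

variable {Δ : Set (Fin n × Fin n)}

lemma Xinv_mul_X_mem_QDelta (hΔ : IsTriangulation Δ) {p q r : Fin n} (hpq : p ≠ q)
    (hpr : (p, r) ∈ Δ) (hrq : (r, q) ∈ Δ) : Xinv r p * X r q ∈ QDelta Δ :=
  Algebra.subset_adjoin ⟨p, q, r, hpq, hΔ.ne hpr, (hΔ.ne hrq).symm, hpr, hrq, rfl⟩

theorem Xinv_mul_X_mem_QDelta_of_cdist_lt (hΔ : IsTriangulation Δ) {u v j : Fin n}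
    (huv : (u, v) ∈ Δ) (hj₀ : 0 < cdist u j) (hjv : cdist u j < cdist u v) :
    Xinv u v * X u j ∈ QDelta Δ ∧ Xinv v u * X v j ∈ QDelta Δ := by
  induction hd : cdist u v using Nat.strong_induction_on generalizing u v with
  | _ d ih =>
    subst hd
    have hvu := hΔ.swap_mem huv
    obtain ⟨m, hm₀, hm_lt, humΔ, hmvΔ⟩ := hΔ.exists_triangle huv (by omega)
    have hum : u ≠ m := cdist_pos.1 hm₀
    have hmv : m ≠ v := fun e => hm_lt.ne (congrArg (cdist u) e)
    have hgen_u : Xinv u v * X u m ∈ QDelta Δ := Xinv_mul_X_mem_QDelta hΔ hmv.symm hvu humΔ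
    have hgen_v : Xinv v u * X v m ∈ QDelta Δ :=
      Xinv_mul_X_mem_QDelta hΔ hum huv (hΔ.swap_mem hmvΔ)
    rcases lt_trichotomy (cdist u j) (cdist u m) with hjm | hjm | hjm
    · obtain ⟨ih_u, ih_m⟩ := ih _ (by omega) humΔ hj₀ hjm rfl
      have hcyc : IsCyclicSeq [m, v, u, j] :=
        (isCyclicSeq_iff_cdist.2 ⟨hj₀, hjm, hm_lt⟩).rotate 2
      refine ⟨?_, ?_⟩
      · rw [Xinv_mul_X_eq_mul hum]
        exact mul_mem hgen_u ih_u
      · rw [Xinv_mul_X_eq_add (m := m) (hΔ.ne hvu) ((X_exchange hcyc).trans (add_comm _ _))]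
        exact add_mem (mul_mem hgen_v ih_u) ih_m
    · obtain rfl : j = m := cdist_injective u hjm
      exact ⟨hgen_u, hgen_v⟩
    · have hmv_eq := cdist_add_cdist_of_le hm_lt.le
      have hmj_eq := cdist_add_cdist_of_le hjm.le
      obtain ⟨ih_m, ih_v⟩ := ih _ (by omega) hmvΔ (by omega) (by omega) rfl
      have hcyc : IsCyclicSeq [v, u, m, j] :=
        (isCyclicSeq_iff_cdist.2 ⟨hm₀, hjm, hjv⟩).rotate 3
      refine ⟨?_, ?_⟩
      · rw [Xinv_mul_X_eq_add (hΔ.ne huv) (X_exchange hcyc)]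
        exact add_mem (mul_mem hgen_u ih_v) ih_m
      · rw [Xinv_mul_X_eq_mul hmv.symm]
        exact mul_mem hgen_v ih_v

end QDelta

theorem noncommutative_polynomial_general (n : ℕ) (Δ : Set (Fin n × Fin n))
    (hΔ : IsTriangulation Δ) (i j k : Fin n)
    (hij : i ≠ j) (hjk : j ≠ k) (hikΔ : (i, k) ∈ Δ) :
    Xinv i k * X i j ∈ Algebra.adjoin ℚ
      {a : NCPoly n | ∃ p q r : Fin n, p ≠ q ∧ p ≠ r ∧ q ≠ r ∧
        (p, r) ∈ Δ ∧ (r, q) ∈ Δ ∧ a = Xinv r p * X r q} := by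
  have hj : 0 < cdist i j := cdist_pos.2 hij
  rcases lt_or_gt_of_ne (fun e => hjk (cdist_injective i e)) with hjk | hkj
  · exact (Xinv_mul_X_mem_QDelta_of_cdist_lt hΔ hikΔ hj hjk).1
  · have hikj := cdist_add_cdist_of_le hkj.le
    have hiki := cdist_add_cdist_swap (hΔ.ne hikΔ)
    have := cdist_lt i j
    exact (Xinv_mul_X_mem_QDelta_of_cdist_lt hΔ (hΔ.swap_mem hikΔ) (by omega) (by omega)).2

/-- **Noncommutative polynomial phenomenon.** Let `𝒬_Δ` be the subalgebra
of `𝒜_n` generated by the `y_{pq}^r = x_{rp}⁻¹ x_{rq}` with `(p,r), (r,q) ∈ Δ`. Then for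
distinct `i, j, k` with `(i,k) ∈ Δ`, the element `y_{kj}^i = x_{ik}⁻¹ x_{ij}` lies
in `𝒬_Δ`. -/
theorem noncommutative_polynomial (n : ℕ) (hn : 3 ≤ n) (Δ : Set (Fin n × Fin n))
    (hΔ : IsTriangulation Δ) (i j k : Fin n)
    (hij : i ≠ j) (hik : i ≠ k) (hjk : j ≠ k) (hikΔ : (i, k) ∈ Δ) :
    Xinv i k * X i j ∈ Algebra.adjoin ℚ
      {a : NCPoly n | ∃ p q r : Fin n, p ≠ q ∧ p ≠ r ∧ q ≠ r ∧
        (p, r) ∈ Δ ∧ (r, q) ∈ Δ ∧ a = Xinv r p * X r q} :=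
  noncommutative_polynomial_general n Δ hΔ i j k hij hjk hikΔ

end NCPolygon
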